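/- Let C ∈ ℝ_max^{n×n}, p ∈ ℝ_max^n and q ∈ (ℝ ∪ {+∞})^n. Then for every x ∈ ℝ^n, max( max_{(i,j) : c_{ij} ∈ ℝ} (c_{ij} + x_j − x_i), max_{i : p_i ∈ ℝ} (p_i − x_i), max_{i : q_i ∈ ℝ} (x_i − q_i) ) ≥ max( ρ(C), (1/2) · max_{i : p_i ∈ ℝ and q_i ∈ ℝ} (p_i − q_i) ), where both sides lie in ℝ ∪ {−∞} and maxima over empty sets are −∞. (In max-plus notation: x^- ⊗ C ⊗ x ⊕ x^- ⊗ p ⊕ q^- ⊗ x ≥ ρ(C) ⊕ (q^- ⊗ p)^{⊗1/2}, so ρ(C) ⊕ (q^- ⊗ p)^{⊗1/2} is a lower bound on the optimal value of the tropical pseudoquadratic optimization problem.) -/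

import Mathlib

/-- Max-plus identity matrix: `0` on the diagonal, `−∞` off it. -/
noncomputable def mpId (n : ℕ) : Fin n → Fin n → EReal := fun i j => if i = j then 0 else ⊥

/-- Max-plus matrix product. -/
noncomputable def mpMul {n : ℕ} (A B : Fin n → Fin n → EReal) : Fin n → Fin n → EReal :=
  fun i j => ⨆ k, A i k + B k j

/-- Max-plus matrix powers, `A^0 = I`. -/
noncomputable def mpPow {n : ℕ} (A : Fin n → Fin n → EReal) : ℕ → Fin n → Fin n → EReal
  | 0 => mpId n
  | k + 1 => mpMul (mpPow A k) A

/-- Kleene star truncation `A* = I ⊕ A ⊕ ⋯ ⊕ A^{n−1}` (entrywise maximum). -/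
noncomputable def mpStar {n : ℕ} (A : Fin n → Fin n → EReal) : Fin n → Fin n → EReal :=
  fun i j => ⨆ k : Fin n, mpPow A (k : ℕ) i j

/-- Maximum cycle mean `ρ(A)`: the supremum, over all closed walks
`f 0, f 1, …, f k = f 0` (`k ≥ 1`), of the mean weight of the walk.  A walk using
a `−∞` arc has mean `−∞`, so this equals the maximum mean over elementary cycles
of the digraph of finite entries, and it is `−∞` when that digraph is acyclic. -/
noncomputable def rho {n : ℕ} (A : Fin n → Fin n → EReal) : EReal :=
  ⨆ (k : ℕ) (_ : 0 < k) (f : ℕ → Fin n) (_ : f k = f 0),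
    (((k : ℝ)⁻¹ : ℝ) : EReal) * ∑ i ∈ Finset.range k, A (f i) (f (i + 1))

/-! Bound the right-hand side by an arbitrary real `v` from above. Then every finite `c_ij` is
at most `v + x_i - x_j`, so along a closed walk the potentials `x_i` telescope and the mean weight
is at most `v`; likewise `p_i ≤ v + x_i` and `q_i ≥ x_i - v`, whence `p_i - q_i ≤ 2v`. Working
with real bounds `v` sidesteps the cases where the right-hand side is `±∞`. -/

namespace EReal

lemma le_coe_of_add_sub_le {a : EReal} {s t v : ℝ} (h : a ≠ ⊥ → a + s - t ≤ v) :
    a ≤ ((v + t - s : ℝ) : EReal) := by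
  induction a with
  | bot => exact bot_le
  | top => simp at h
  | coe a =>
    have h := h (coe_ne_bot a)
    norm_cast at h ⊢
    linarith

lemma le_coe_of_sub_le {a : EReal} {t v : ℝ} (h : a ≠ ⊥ → a - t ≤ v) :
    a ≤ ((v + t : ℝ) : EReal) := by
  simpa using le_coe_of_add_sub_le (s := 0) (by simpa using h)

lemma coe_le_of_coe_sub_le {b : EReal} {t v : ℝ} (h : b ≠ ⊤ → t - b ≤ v) :
    ((t - v : ℝ) : EReal) ≤ b := by
  induction b with
  | bot => simp at h
  | top => exact le_top
  | coe b =>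
    have h := h (coe_ne_top b)
    norm_cast at h ⊢
    linarith

lemma coe_sum {α : Type*} (s : Finset α) (f : α → ℝ) :
    ((∑ i ∈ s, f i : ℝ) : EReal) = ∑ i ∈ s, (f i : EReal) :=
  map_sum (⟨⟨(↑), coe_zero⟩, coe_add⟩ : ℝ →+ EReal) f s

end EReal

theorem rho_le_of_le_potential {n : ℕ} (A : Fin n → Fin n → EReal) (x : Fin n → ℝ) (v : ℝ)
    (h : ∀ i j, A i j ≤ ((v + x i - x j : ℝ) : EReal)) : rho A ≤ v := by
  refine iSup_le fun k => iSup_le fun hk => iSup_le fun f => iSup_le fun hf => ?_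
  have hk' : (0 : ℝ) < k := Nat.cast_pos.mpr hk
  have hsum : ∑ i ∈ Finset.range k, A (f i) (f (i + 1)) ≤ ((k * v : ℝ) : EReal) := calc
    _ ≤ ∑ i ∈ Finset.range k, ((v + x (f i) - x (f (i + 1)) : ℝ) : EReal) :=
        Finset.sum_le_sum fun i _ => h _ _
    _ = ((k * v : ℝ) : EReal) := by
        rw [← EReal.coe_sum]
        simp_rw [add_sub_assoc]
        rw [Finset.sum_add_distrib, Finset.sum_range_sub' (fun i => x (f i)), hf]
        simp
  calc (((k : ℝ)⁻¹ : ℝ) : EReal) * ∑ i ∈ Finset.range k, A (f i) (f (i + 1))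
      ≤ (((k : ℝ)⁻¹ : ℝ) : EReal) * ((k * v : ℝ) : EReal) :=
        mul_le_mul_of_nonneg_left hsum (EReal.coe_nonneg.mpr (inv_nonneg.mpr hk'.le))
    _ = v := by rw [← EReal.coe_mul, inv_mul_cancel_left₀ hk'.ne']

theorem inv_two_mul_iSup_sub_le {ι : Type*} (P Q : ι → Prop) (p q : ι → EReal) (x : ι → ℝ) (v : ℝ)
    (hp : ∀ i, p i ≤ ((v + x i : ℝ) : EReal)) (hq : ∀ i, ((x i - v : ℝ) : EReal) ≤ q i) :
    (((2 : ℝ)⁻¹ : ℝ) : EReal) * ⨆ (i) (_ : P i) (_ : Q i), (p i - q i) ≤ v := by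
  have hS : ⨆ (i) (_ : P i) (_ : Q i), (p i - q i) ≤ ((2 * v : ℝ) : EReal) :=
    iSup₂_le fun i _ => iSup_le fun _ =>
      (EReal.sub_le_sub (hp i) (hq i)).trans_eq (by norm_cast; ring_nf)
  calc (((2 : ℝ)⁻¹ : ℝ) : EReal) * ⨆ (i) (_ : P i) (_ : Q i), (p i - q i)
      ≤ (((2 : ℝ)⁻¹ : ℝ) : EReal) * ((2 * v : ℝ) : EReal) :=
        mul_le_mul_of_nonneg_left hS (by norm_num)
    _ = v := by rw [← EReal.coe_mul, inv_mul_cancel_left₀ two_ne_zero]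

theorem stmt18 (n : ℕ) (C : Fin n → Fin n → EReal) (p q : Fin n → EReal) :
    ∀ x : Fin n → ℝ,
      rho C ⊔
        ((((2 : ℝ)⁻¹ : ℝ) : EReal) * ⨆ (i) (_ : p i ≠ ⊥) (_ : q i ≠ ⊤), (p i - q i)) ≤
      (⨆ (i) (j) (_ : C i j ≠ ⊥), (C i j + (x j : EReal) - (x i : EReal))) ⊔
      (⨆ (i) (_ : p i ≠ ⊥), (p i - (x i : EReal))) ⊔
      (⨆ (i) (_ : q i ≠ ⊤), ((x i : EReal) - q i)) := by
  intro x
  refine EReal.le_of_forall_lt_iff_le.mp fun v hv => ?_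
  obtain ⟨⟨hCv, hpv⟩, hqv⟩ := by simpa only [sup_le_iff, iSup_le_iff] using hv.le
  exact sup_le
    (rho_le_of_le_potential C x v fun i j => EReal.le_coe_of_add_sub_le (hCv i j))
    (inv_two_mul_iSup_sub_le _ _ p q x v (fun i => EReal.le_coe_of_sub_le (hpv i))
      (fun i => EReal.coe_le_of_coe_sub_le (hqv i)))
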